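/- Let D' be obtained from a chord diagram D by a triple move with distinguished chords a, b, c (replaced by d, e, f), and let φ be the induced bijection from the chords of D to the chords of D' (fixing every chord other than a, b, c and sending a, b, c to d, e, f respectively). Then: (i) for any two chords x, y of D not both among {a, b, c}, x crosses y in D if and only if φ(x) crosses φ(y) in D'; (ii) for each of the three pairs among {a, b, c}, the pair crosses in D if and only if the corresponding pair among {d, e, f} does not cross in D'. In particular, a triple move changes exactly the three crossing relations among the distinguished triple and no others. (The chord-correspondence claim used throughout the proofs of Theorems 1 and 2.) -/
import Mathlib


open scoped Classical

/-- Two chords of a chord diagram on the points `0 < 1 < ⋯ < N-1` (in this cyclic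
order) cross if their endpoints interleave. -/
def Crosses {N : ℕ} (c d : Sym2 (Fin N)) : Prop :=
  ∃ a b x y : Fin N, a < x ∧ x < b ∧ b < y ∧
    ((c = s(a, b) ∧ d = s(x, y)) ∨ (c = s(x, y) ∧ d = s(a, b)))

/-- A chord diagram of order `n`: a partition of the `2n` points `0, 1, …, 2n-1`
(in this cyclic order on a circle) into `n` unordered pairs, the chords. -/
structure ChordDiagram (n : ℕ) where
  chords : Finset (Sym2 (Fin (2 * n)))
  not_diag : ∀ c ∈ chords, ¬ c.IsDiag
  cover : ∀ x : Fin (2 * n), ∃! c, c ∈ chords ∧ x ∈ c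

/-- The trivializing number: the minimum number of chords whose deletion yields a
trivial chord diagram (one with no two crossing chords). -/
noncomputable def tr {n : ℕ} (D : ChordDiagram n) : ℕ :=
  sInf {k | ∃ S ⊆ D.chords, S.card = k ∧
    ∀ c ∈ D.chords \ S, ∀ d ∈ D.chords \ S, ¬ Crosses c d}

/-- The cross chord number: the number of unordered pairs of chords that cross. -/
noncomputable def Xnum {n : ℕ} (D : ChordDiagram n) : ℕ :=
  ((D.chords ×ˢ D.chords).filter fun p => Crosses p.1 p.2).card / 2

/-- Two points are cyclically adjacent on the circle `0, 1, …, N-1`. -/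
def Adjacent {N : ℕ} (p q : Fin N) : Prop :=
  (p.val + 1) % N = q.val ∨ (q.val + 1) % N = p.val

/-- The ternary cyclic-order relation on the points `0, 1, …, N-1`. -/
def CyclicBtw {N : ℕ} (a b c : Fin N) : Prop :=
  (a < b ∧ b < c) ∨ (b < c ∧ c < a) ∨ (c < a ∧ a < b)

/-- A first move (first flat Reidemeister move): `D'` is obtained from `D` by
adding an isolated chord. -/
def FirstMove {n : ℕ} (D : ChordDiagram n) (D' : ChordDiagram (n + 1)) : Prop :=
  ∃ ι : Fin (2 * n) → Fin (2 * (n + 1)),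
    Function.Injective ι ∧
    (∀ a b c, CyclicBtw a b c → CyclicBtw (ι a) (ι b) (ι c)) ∧
    (∀ ch ∈ D.chords, ch.map ι ∈ D'.chords) ∧
    ∃ p q : Fin (2 * (n + 1)), Adjacent p q ∧ s(p, q) ∈ D'.chords ∧
      ∀ x, x ∉ Set.range ι ↔ (x = p ∨ x = q)

/-- A triple move with distinguished pairs `A = {a₁, a₂}`, `B = {b₁, b₂}`,
`C = {c₁, c₂}` of cyclically adjacent points and distinguished chords
`s(a₁, b₁)`, `s(a₂, c₁)`, `s(b₂, c₂)`: `D'` is obtained from `D` by transposing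
the two points of each of `A`, `B`, `C`. -/
def TripleMoveAt {n : ℕ} (D D' : ChordDiagram n)
    (a₁ a₂ b₁ b₂ c₁ c₂ : Fin (2 * n)) : Prop :=
  Adjacent a₁ a₂ ∧ Adjacent b₁ b₂ ∧ Adjacent c₁ c₂ ∧
  ([a₁, a₂, b₁, b₂, c₁, c₂].Pairwise (· ≠ ·)) ∧
  s(a₁, b₁) ∈ D.chords ∧ s(a₂, c₁) ∈ D.chords ∧ s(b₂, c₂) ∈ D.chords ∧
  D'.chords = D.chords.image
    (Sym2.map (Equiv.swap a₁ a₂ * Equiv.swap b₁ b₂ * Equiv.swap c₁ c₂))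

/-- Three chords pairwise cross. -/
def PairwiseCross {N : ℕ} (x y z : Sym2 (Fin N)) : Prop :=
  Crosses x y ∧ Crosses x z ∧ Crosses y z

/-- Exactly one of the three pairs among three chords crosses. -/
def ExactlyOneCross {N : ℕ} (x y z : Sym2 (Fin N)) : Prop :=
  (Crosses x y ∧ ¬ Crosses x z ∧ ¬ Crosses y z) ∨
  (¬ Crosses x y ∧ Crosses x z ∧ ¬ Crosses y z) ∨
  (¬ Crosses x y ∧ ¬ Crosses x z ∧ Crosses y z)

/-- A strong third move: a triple move whose three distinguished chords pairwise
cross in `D`, or whose three replacement chords pairwise cross in `D'`. -/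
def StrongThirdMove {n : ℕ} (D D' : ChordDiagram n) : Prop :=
  ∃ a₁ a₂ b₁ b₂ c₁ c₂, TripleMoveAt D D' a₁ a₂ b₁ b₂ c₁ c₂ ∧
    (PairwiseCross s(a₁, b₁) s(a₂, c₁) s(b₂, c₂) ∨
     PairwiseCross s(a₂, b₂) s(a₁, c₂) s(b₁, c₁))

/-- A weak third move: a triple move such that exactly one pair of the three
distinguished chords crosses in `D`, or exactly one pair of the three
replacement chords crosses in `D'`. -/
def WeakThirdMove {n : ℕ} (D D' : ChordDiagram n) : Prop :=
  ∃ a₁ a₂ b₁ b₂ c₁ c₂, TripleMoveAt D D' a₁ a₂ b₁ b₂ c₁ c₂ ∧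
    (ExactlyOneCross s(a₁, b₁) s(a₂, c₁) s(b₂, c₂) ∨
     ExactlyOneCross s(a₂, b₂) s(a₁, c₂) s(b₁, c₁))


def Cr {N : ℕ} (u v w z : Fin N) : Prop :=
  (u<w∧w<v∧v<z) ∨ (u<z∧z<v∧v<w) ∨ (v<w∧w<u∧u<z) ∨ (v<z∧z<u∧u<w) ∨
  (w<u∧u<z∧z<v) ∨ (w<v∧v<z∧z<u) ∨ (z<u∧u<w∧w<v) ∨ (z<v∧v<w∧w<u)

lemma crosses_iff {N : ℕ} (u v w z : Fin N) : Crosses s(u,v) s(w,z) ↔ Cr u v w z := by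
  constructor
  · rintro ⟨a,b,x,y,h1,h2,h3,(⟨hc,hd⟩|⟨hc,hd⟩)⟩ <;>
      rw [Sym2.eq_iff] at hc hd <;>
      rcases hc with ⟨rfl,rfl⟩|⟨rfl,rfl⟩ <;> rcases hd with ⟨rfl,rfl⟩|⟨rfl,rfl⟩ <;>
      simp only [Cr, Fin.lt_def] at * <;> omega
  · intro hc
    rcases hc with h|h|h|h|h|h|h|h
    · exact ⟨u,v,w,z,h.1,h.2.1,h.2.2, Or.inl ⟨rfl,rfl⟩⟩
    · exact ⟨u,v,z,w,h.1,h.2.1,h.2.2, Or.inl ⟨rfl, Sym2.eq_swap⟩⟩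
    · exact ⟨v,u,w,z,h.1,h.2.1,h.2.2, Or.inl ⟨Sym2.eq_swap,rfl⟩⟩
    · exact ⟨v,u,z,w,h.1,h.2.1,h.2.2, Or.inl ⟨Sym2.eq_swap, Sym2.eq_swap⟩⟩
    · exact ⟨w,z,u,v,h.1,h.2.1,h.2.2, Or.inr ⟨rfl,rfl⟩⟩
    · exact ⟨w,z,v,u,h.1,h.2.1,h.2.2, Or.inr ⟨Sym2.eq_swap,rfl⟩⟩
    · exact ⟨z,w,u,v,h.1,h.2.1,h.2.2, Or.inr ⟨rfl,Sym2.eq_swap⟩⟩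
    · exact ⟨z,w,v,u,h.1,h.2.1,h.2.2, Or.inr ⟨Sym2.eq_swap,Sym2.eq_swap⟩⟩

lemma crosses_comm {N : ℕ} (c d : Sym2 (Fin N)) : Crosses c d ↔ Crosses d c := by
  unfold Crosses
  constructor <;> rintro ⟨a,b,x,y,h1,h2,h3,h4⟩ <;> exact ⟨a,b,x,y,h1,h2,h3, by tauto⟩

lemma ne_val {N : ℕ} {a b : Fin N} (h : a ≠ b) : a.val ≠ b.val := fun h' => h (Fin.ext h')

lemma adj_cases {N : ℕ} {p q : Fin N} (h : Adjacent p q) :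
    q.val = p.val+1 ∨ p.val = q.val+1 ∨ (p.val+1 = N ∧ q.val = 0) ∨ (q.val+1 = N ∧ p.val = 0) := by
  have hp := p.isLt; have hq := q.isLt
  have h' : (p.val + 1) % N = q.val ∨ (q.val + 1) % N = p.val := h
  rcases h' with h|h
  · rcases Nat.lt_or_ge (p.val+1) N with h1|h1
    · rw [Nat.mod_eq_of_lt h1] at h; omega
    · have he : p.val + 1 = N := by omega
      rw [he, Nat.mod_self] at h; omega
  · rcases Nat.lt_or_ge (q.val+1) N with h1|h1
    · rw [Nat.mod_eq_of_lt h1] at h; omega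
    · have he : q.val + 1 = N := by omega
      rw [he, Nat.mod_self] at h; omega

lemma cr_iff₂ {N : ℕ} (u v w z : Fin N) : Cr u v w z ↔
    ((u:ℕ) ≠ v ∧ (w:ℕ) ≠ z ∧ (w:ℕ) ≠ u ∧ (w:ℕ) ≠ v ∧ (z:ℕ) ≠ u ∧ (z:ℕ) ≠ v) ∧
    ¬((((u:ℕ)<w ∧ (w:ℕ)<v) ∨ ((v:ℕ)<w ∧ (w:ℕ)<u)) ↔
      (((u:ℕ)<z ∧ (z:ℕ)<v) ∨ ((v:ℕ)<z ∧ (z:ℕ)<u))) := by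
  simp only [Cr, Fin.lt_def]
  constructor
  · rintro (h|h|h|h|h|h|h|h) <;> omega
  · rintro ⟨hd, hiff⟩
    obtain hu | hu : (u:ℕ) < v ∨ (v:ℕ) < u := by omega
    · by_cases hw : (u:ℕ) < w ∧ (w:ℕ) < v
      · obtain hz | hz : (z:ℕ) < u ∨ (v:ℕ) < z := by omega
        · exact Or.inr (Or.inr (Or.inr (Or.inr (Or.inr (Or.inr (Or.inl ⟨hz, hw.1, hw.2⟩))))))
        · exact Or.inl ⟨hw.1, hw.2, hz⟩
      · have hz : (u:ℕ) < z ∧ (z:ℕ) < v := by omega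
        obtain hww | hww : (w:ℕ) < u ∨ (v:ℕ) < w := by omega
        · exact Or.inr (Or.inr (Or.inr (Or.inr (Or.inl ⟨hww, hz.1, hz.2⟩))))
        · exact Or.inr (Or.inl ⟨hz.1, hz.2, hww⟩)
    · by_cases hw : (v:ℕ) < w ∧ (w:ℕ) < u
      · obtain hz | hz : (z:ℕ) < v ∨ (u:ℕ) < z := by omega
        · exact Or.inr (Or.inr (Or.inr (Or.inr (Or.inr (Or.inr (Or.inr ⟨hz, hw.1, hw.2⟩))))))
        · exact Or.inr (Or.inr (Or.inl ⟨hw.1, hw.2, hz⟩))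
      · have hz : (v:ℕ) < z ∧ (z:ℕ) < u := by omega
        obtain hww | hww : (w:ℕ) < v ∨ (u:ℕ) < w := by omega
        · exact Or.inr (Or.inr (Or.inr (Or.inr (Or.inr (Or.inl ⟨hww, hz.1, hz.2⟩)))))
        · exact Or.inr (Or.inr (Or.inr (Or.inl ⟨hz.1, hz.2, hww⟩)))


section Moves
variable {N : ℕ} {p q v w z : Fin N}

lemma cr_move₁ (h : Adjacent p q)
    (h1 : v ≠ p) (h2 : v ≠ q) (h3 : w ≠ p) (h4 : w ≠ q) (h5 : z ≠ p) (h6 : z ≠ q) :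
    Cr p v w z ↔ Cr q v w z := by
  have hc := adj_cases h
  have e1 := ne_val h1; have e2 := ne_val h2; have e3 := ne_val h3
  have e4 := ne_val h4; have e5 := ne_val h5; have e6 := ne_val h6
  have := p.isLt; have := q.isLt; have := v.isLt; have := w.isLt; have := z.isLt
  rw [cr_iff₂, cr_iff₂]; omega

lemma cr_move₂ (h : Adjacent p q)
    (h1 : v ≠ p) (h2 : v ≠ q) (h3 : w ≠ p) (h4 : w ≠ q) (h5 : z ≠ p) (h6 : z ≠ q) :
    Cr v p w z ↔ Cr v q w z := by
  have hc := adj_cases h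
  have e1 := ne_val h1; have e2 := ne_val h2; have e3 := ne_val h3
  have e4 := ne_val h4; have e5 := ne_val h5; have e6 := ne_val h6
  have := p.isLt; have := q.isLt; have := v.isLt; have := w.isLt; have := z.isLt
  rw [cr_iff₂, cr_iff₂]; omega

lemma cr_move₃ (h : Adjacent p q)
    (h1 : v ≠ p) (h2 : v ≠ q) (h3 : w ≠ p) (h4 : w ≠ q) (h5 : z ≠ p) (h6 : z ≠ q) :
    Cr v w p z ↔ Cr v w q z := by
  have hc := adj_cases h
  have e1 := ne_val h1; have e2 := ne_val h2; have e3 := ne_val h3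
  have e4 := ne_val h4; have e5 := ne_val h5; have e6 := ne_val h6
  have := p.isLt; have := q.isLt; have := v.isLt; have := w.isLt; have := z.isLt
  rw [cr_iff₂, cr_iff₂]; omega

lemma cr_move₄ (h : Adjacent p q)
    (h1 : v ≠ p) (h2 : v ≠ q) (h3 : w ≠ p) (h4 : w ≠ q) (h5 : z ≠ p) (h6 : z ≠ q) :
    Cr v w z p ↔ Cr v w z q := by
  have hc := adj_cases h
  have e1 := ne_val h1; have e2 := ne_val h2; have e3 := ne_val h3
  have e4 := ne_val h4; have e5 := ne_val h5; have e6 := ne_val h6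
  have := p.isLt; have := q.isLt; have := v.isLt; have := w.isLt; have := z.isLt
  rw [cr_iff₂, cr_iff₂]; omega

lemma cr_flip₁₃ (h : Adjacent p q)
    (h1 : v ≠ p) (h2 : v ≠ q) (h3 : w ≠ p) (h4 : w ≠ q) (h5 : v ≠ w) :
    Cr p v q w ↔ ¬ Cr q v p w := by
  have hc := adj_cases h
  have e1 := ne_val h1; have e2 := ne_val h2; have e3 := ne_val h3
  have e4 := ne_val h4; have e5 := ne_val h5
  have := p.isLt; have := q.isLt; have := v.isLt; have := w.isLt
  rw [cr_iff₂, cr_iff₂]; omega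

lemma cr_flip₂₃ (h : Adjacent p q)
    (h1 : v ≠ p) (h2 : v ≠ q) (h3 : w ≠ p) (h4 : w ≠ q) (h5 : v ≠ w) :
    Cr v p q w ↔ ¬ Cr v q p w := by
  have hc := adj_cases h
  have e1 := ne_val h1; have e2 := ne_val h2; have e3 := ne_val h3
  have e4 := ne_val h4; have e5 := ne_val h5
  have := p.isLt; have := q.isLt; have := v.isLt; have := w.isLt
  rw [cr_iff₂, cr_iff₂]; omega

lemma cr_flip₂₄ (h : Adjacent p q)
    (h1 : v ≠ p) (h2 : v ≠ q) (h3 : w ≠ p) (h4 : w ≠ q) (h5 : v ≠ w) :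
    Cr v p w q ↔ ¬ Cr v q w p := by
  have hc := adj_cases h
  have e1 := ne_val h1; have e2 := ne_val h2; have e3 := ne_val h3
  have e4 := ne_val h4; have e5 := ne_val h5
  have := p.isLt; have := q.isLt; have := v.isLt; have := w.isLt
  rw [cr_iff₂, cr_iff₂]; omega

end Moves

lemma sym2_rep {α : Type*} (x : Sym2 α) : ∃ u v, x = s(u,v) := by
  induction x using Sym2.ind with | _ u v => exact ⟨u, v, rfl⟩

/-- chord correspondence for a triple move: the induced
bijection `φ = Sym2.map τ` (where `τ` transposes the two points of each of the
three distinguished pairs) preserves the crossing relation on every pair of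
chords not both distinguished, and flips the crossing relation on each of the
three pairs of distinguished chords. -/
theorem tripleMove_correspondence {n : ℕ} (D D' : ChordDiagram n)
    (a₁ a₂ b₁ b₂ c₁ c₂ : Fin (2 * n))
    (h : TripleMoveAt D D' a₁ a₂ b₁ b₂ c₁ c₂) :
    (∀ x ∈ D.chords, ∀ y ∈ D.chords,
      ¬(x ∈ ({s(a₁, b₁), s(a₂, c₁), s(b₂, c₂)} : Set (Sym2 (Fin (2 * n)))) ∧
        y ∈ ({s(a₁, b₁), s(a₂, c₁), s(b₂, c₂)} : Set (Sym2 (Fin (2 * n))))) →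
      (Crosses x y ↔
        Crosses
          (x.map (Equiv.swap a₁ a₂ * Equiv.swap b₁ b₂ * Equiv.swap c₁ c₂))
          (y.map (Equiv.swap a₁ a₂ * Equiv.swap b₁ b₂ * Equiv.swap c₁ c₂)))) ∧
    (Crosses s(a₁, b₁) s(a₂, c₁) ↔ ¬ Crosses s(a₂, b₂) s(a₁, c₂)) ∧
    (Crosses s(a₁, b₁) s(b₂, c₂) ↔ ¬ Crosses s(a₂, b₂) s(b₁, c₁)) ∧
    (Crosses s(a₂, c₁) s(b₂, c₂) ↔ ¬ Crosses s(a₁, c₂) s(b₁, c₁)) := by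
  obtain ⟨hA, hB, hC, hdist, ha, hb, hc, hD'⟩ := h
  have p1 := List.pairwise_cons.mp hdist
  have p2 := List.pairwise_cons.mp p1.2
  have p3 := List.pairwise_cons.mp p2.2
  have p4 := List.pairwise_cons.mp p3.2
  have p5 := List.pairwise_cons.mp p4.2
  have n12 : a₁ ≠ a₂ := p1.1 _ (by simp)
  have n13 : a₁ ≠ b₁ := p1.1 _ (by simp)
  have n14 : a₁ ≠ b₂ := p1.1 _ (by simp)
  have n15 : a₁ ≠ c₁ := p1.1 _ (by simp)
  have n16 : a₁ ≠ c₂ := p1.1 _ (by simp)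
  have n23 : a₂ ≠ b₁ := p2.1 _ (by simp)
  have n24 : a₂ ≠ b₂ := p2.1 _ (by simp)
  have n25 : a₂ ≠ c₁ := p2.1 _ (by simp)
  have n26 : a₂ ≠ c₂ := p2.1 _ (by simp)
  have n34 : b₁ ≠ b₂ := p3.1 _ (by simp)
  have n35 : b₁ ≠ c₁ := p3.1 _ (by simp)
  have n36 : b₁ ≠ c₂ := p3.1 _ (by simp)
  have n45 : b₂ ≠ c₁ := p4.1 _ (by simp)
  have n46 : b₂ ≠ c₂ := p4.1 _ (by simp)
  have n56 : c₁ ≠ c₂ := p5.1 _ (by simp)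
  set τ := Equiv.swap a₁ a₂ * Equiv.swap b₁ b₂ * Equiv.swap c₁ c₂ with hτ
  have tapp : ∀ t, τ t = Equiv.swap a₁ a₂ (Equiv.swap b₁ b₂ (Equiv.swap c₁ c₂ t)) :=
    fun t => rfl
  have τfix : ∀ t : Fin (2*n), t ≠ a₁ → t ≠ a₂ → t ≠ b₁ → t ≠ b₂ → t ≠ c₁ → t ≠ c₂ →
      τ t = t := by
    intro t h1 h2 h3 h4 h5 h6
    rw [tapp, Equiv.swap_apply_of_ne_of_ne h5 h6, Equiv.swap_apply_of_ne_of_ne h3 h4,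
      Equiv.swap_apply_of_ne_of_ne h1 h2]
  have τa₁ : τ a₁ = a₂ := by
    rw [tapp, Equiv.swap_apply_of_ne_of_ne n15 n16, Equiv.swap_apply_of_ne_of_ne n13 n14,
      Equiv.swap_apply_left]
  have τa₂ : τ a₂ = a₁ := by
    rw [tapp, Equiv.swap_apply_of_ne_of_ne n25 n26, Equiv.swap_apply_of_ne_of_ne n23 n24,
      Equiv.swap_apply_right]
  have τb₁ : τ b₁ = b₂ := by
    rw [tapp, Equiv.swap_apply_of_ne_of_ne n35 n36, Equiv.swap_apply_left,
      Equiv.swap_apply_of_ne_of_ne (Ne.symm n14) (Ne.symm n24)]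
  have τb₂ : τ b₂ = b₁ := by
    rw [tapp, Equiv.swap_apply_of_ne_of_ne n45 n46, Equiv.swap_apply_right,
      Equiv.swap_apply_of_ne_of_ne (Ne.symm n13) (Ne.symm n23)]
  have τc₁ : τ c₁ = c₂ := by
    rw [tapp, Equiv.swap_apply_left, Equiv.swap_apply_of_ne_of_ne (Ne.symm n36) (Ne.symm n46),
      Equiv.swap_apply_of_ne_of_ne (Ne.symm n16) (Ne.symm n26)]
  have τc₂ : τ c₂ = c₁ := by
    rw [tapp, Equiv.swap_apply_right, Equiv.swap_apply_of_ne_of_ne (Ne.symm n35) (Ne.symm n45),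
      Equiv.swap_apply_of_ne_of_ne (Ne.symm n15) (Ne.symm n25)]
  have uniq : ∀ x ∈ D.chords, ∀ t : Fin (2*n), t ∈ x → ∀ y ∈ D.chords, t ∈ y → x = y := by
    intro x hx t htx y hy hty
    obtain ⟨c', -, hu⟩ := D.cover t
    rw [hu x ⟨hx, htx⟩, hu y ⟨hy, hty⟩]
  have avoid : ∀ x ∈ D.chords,
      x ∉ ({s(a₁, b₁), s(a₂, c₁), s(b₂, c₂)} : Set (Sym2 (Fin (2 * n)))) →
      ∀ t, t ∈ x → t ≠ a₁ ∧ t ≠ a₂ ∧ t ≠ b₁ ∧ t ≠ b₂ ∧ t ≠ c₁ ∧ t ≠ c₂ := by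
    intro x hx hxS t ht
    refine ⟨?_, ?_, ?_, ?_, ?_, ?_⟩ <;> rintro rfl <;> apply hxS <;>
      simp only [Set.mem_insert_iff, Set.mem_singleton_iff]
    · exact Or.inl (uniq x hx _ ht _ ha (by simp))
    · exact Or.inr (Or.inl (uniq x hx _ ht _ hb (by simp)))
    · exact Or.inl (uniq x hx _ ht _ ha (by simp))
    · exact Or.inr (Or.inr (uniq x hx _ ht _ hc (by simp)))
    · exact Or.inr (Or.inl (uniq x hx _ ht _ hb (by simp)))
    · exact Or.inr (Or.inr (uniq x hx _ ht _ hc (by simp)))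
  have mapfix : ∀ x ∈ D.chords,
      x ∉ ({s(a₁, b₁), s(a₂, c₁), s(b₂, c₂)} : Set (Sym2 (Fin (2 * n)))) →
      Sym2.map τ x = x := by
    intro x hx hxS
    obtain ⟨u, v, rfl⟩ := sym2_rep x
    obtain ⟨hu1,hu2,hu3,hu4,hu5,hu6⟩ := avoid _ hx hxS u (by simp)
    obtain ⟨hv1,hv2,hv3,hv4,hv5,hv6⟩ := avoid _ hx hxS v (by simp)
    rw [Sym2.map_pair_eq, τfix u hu1 hu2 hu3 hu4 hu5 hu6, τfix v hv1 hv2 hv3 hv4 hv5 hv6]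
  have key : ∀ x ∈ ({s(a₁, b₁), s(a₂, c₁), s(b₂, c₂)} : Set (Sym2 (Fin (2 * n)))),
      ∀ w z : Fin (2*n),
      (w ≠ a₁ ∧ w ≠ a₂ ∧ w ≠ b₁ ∧ w ≠ b₂ ∧ w ≠ c₁ ∧ w ≠ c₂) →
      (z ≠ a₁ ∧ z ≠ a₂ ∧ z ≠ b₁ ∧ z ≠ b₂ ∧ z ≠ c₁ ∧ z ≠ c₂) →
      (Crosses x s(w, z) ↔ Crosses (Sym2.map τ x) s(w, z)) := by
    intro x hxS w z hw hz
    obtain ⟨w1,w2,w3,w4,w5,w6⟩ := hw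
    obtain ⟨z1,z2,z3,z4,z5,z6⟩ := hz
    simp only [Set.mem_insert_iff, Set.mem_singleton_iff] at hxS
    rcases hxS with rfl | rfl | rfl
    · rw [Sym2.map_pair_eq, τa₁, τb₁, crosses_iff, crosses_iff]
      exact (cr_move₁ hA (Ne.symm n13) (Ne.symm n23) w1 w2 z1 z2).trans
        (cr_move₂ hB n23 n24 w3 w4 z3 z4)
    · rw [Sym2.map_pair_eq, τa₂, τc₁, crosses_iff, crosses_iff]
      exact (cr_move₁ hA (Ne.symm n15) (Ne.symm n25) w1 w2 z1 z2).symm.trans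
        (cr_move₂ hC n15 n16 w5 w6 z5 z6)
    · rw [Sym2.map_pair_eq, τb₂, τc₂, crosses_iff, crosses_iff]
      exact (cr_move₁ hB (Ne.symm n36) (Ne.symm n46) w3 w4 z3 z4).symm.trans
        (cr_move₂ hC n35 n36 w5 w6 z5 z6).symm
  refine ⟨?_, ?_, ?_, ?_⟩
  · intro x hx y hy hnot
    by_cases hxS : x ∈ ({s(a₁, b₁), s(a₂, c₁), s(b₂, c₂)} : Set (Sym2 (Fin (2 * n))))
    · have hyS : y ∉ ({s(a₁, b₁), s(a₂, c₁), s(b₂, c₂)} : Set (Sym2 (Fin (2 * n)))) :=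
        fun hyS => hnot ⟨hxS, hyS⟩
      obtain ⟨w, z, rfl⟩ := sym2_rep y
      have hw := avoid _ hy hyS w (by simp)
      have hz := avoid _ hy hyS z (by simp)
      rw [show Sym2.map τ s(w, z) = s(w, z) from mapfix _ hy hyS]
      exact key x hxS w z hw hz
    · by_cases hyS : y ∈ ({s(a₁, b₁), s(a₂, c₁), s(b₂, c₂)} : Set (Sym2 (Fin (2 * n))))
      · obtain ⟨w, z, rfl⟩ := sym2_rep x
        have hw := avoid _ hx hxS w (by simp)
        have hz := avoid _ hx hxS z (by simp)
        rw [show Sym2.map τ s(w, z) = s(w, z) from mapfix _ hx hxS]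
        exact (crosses_comm _ _).trans ((key y hyS w z hw hz).trans (crosses_comm _ _))
      · rw [mapfix _ hx hxS, mapfix _ hy hyS]
  · rw [crosses_iff, crosses_iff]
    have s1 : Cr a₁ b₁ a₂ c₁ ↔ ¬ Cr a₂ b₁ a₁ c₁ :=
      cr_flip₁₃ hA (Ne.symm n13) (Ne.symm n23) (Ne.symm n15) (Ne.symm n25) n35
    have s2 : Cr a₂ b₁ a₁ c₁ ↔ Cr a₂ b₂ a₁ c₁ :=
      cr_move₂ hB n23 n24 n13 n14 (Ne.symm n35) (Ne.symm n45)
    have s3 : Cr a₂ b₂ a₁ c₁ ↔ Cr a₂ b₂ a₁ c₂ :=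
      cr_move₄ hC n25 n26 n45 n46 n15 n16
    rw [s1, s2, s3]
  · rw [crosses_iff, crosses_iff]
    have s1 : Cr a₁ b₁ b₂ c₂ ↔ ¬ Cr a₁ b₂ b₁ c₂ :=
      cr_flip₂₃ hB n13 n14 (Ne.symm n36) (Ne.symm n46) n16
    have s2 : Cr a₁ b₂ b₁ c₂ ↔ Cr a₂ b₂ b₁ c₂ :=
      cr_move₁ hA (Ne.symm n14) (Ne.symm n24) (Ne.symm n13) (Ne.symm n23)
        (Ne.symm n16) (Ne.symm n26)
    have s3 : Cr a₂ b₂ b₁ c₂ ↔ Cr a₂ b₂ b₁ c₁ :=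
      (cr_move₄ hC n25 n26 n45 n46 n35 n36).symm
    rw [s1, s2, s3]
  · rw [crosses_iff, crosses_iff]
    have s1 : Cr a₂ c₁ b₂ c₂ ↔ ¬ Cr a₂ c₂ b₂ c₁ :=
      cr_flip₂₄ hC n25 n26 n45 n46 n24
    have s2 : Cr a₂ c₂ b₂ c₁ ↔ Cr a₁ c₂ b₂ c₁ :=
      (cr_move₁ hA (Ne.symm n16) (Ne.symm n26) (Ne.symm n14) (Ne.symm n24)
        (Ne.symm n15) (Ne.symm n25)).symm
    have s3 : Cr a₁ c₂ b₂ c₁ ↔ Cr a₁ c₂ b₁ c₁ :=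
      (cr_move₃ hB n13 n14 (Ne.symm n36) (Ne.symm n46) (Ne.symm n35) (Ne.symm n45)).symm
    rw [s1, s2, s3]
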